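/- arXiv:2507.07112 — 6 statements merged into one kernel-verified Lean document; each statement's English description precedes it below -/
import Mathlib

section
/- Let a : ℝ → ℝ be differentiable and c : ℝ. Define the vector fields Z, X₁, X₂ : ℝ⁴ → ℝ⁴ by Z(z, y, y₁, y₂) = (1, y₁, y₂, (c - a(y))·y₁), X₁(z, y, y₁, y₂) = (1, 0, 0, 0), and X₂(z, y, y₁, y₂) = (0, 0, 1, y₁/y). Then at every point p = (z, y, y₁, y₂) with y ≠ 0 and y₁ ≠ 0, the Lie bracket satisfies [Z, X₂](p) = (-1/y₁)·Z(p) + (1/y₁)·X₁(p) + (y₂/y₁ - y₁/y)·X₂(p); in particular [Z, X₂](p) lies in the pointwise span of Z(p), X₁(p), X₂(p), so the distribution generated by Z, X₁, X₂ is involutive there. -/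
section aux

abbrev E4 : Type := ℝ × ℝ × ℝ × ℝ

noncomputable def π2 : E4 →L[ℝ] ℝ :=
  (ContinuousLinearMap.fst ℝ ℝ (ℝ × ℝ)).comp (ContinuousLinearMap.snd ℝ ℝ (ℝ × ℝ × ℝ))

noncomputable def π3 : E4 →L[ℝ] ℝ :=
  ((ContinuousLinearMap.fst ℝ ℝ ℝ).comp (ContinuousLinearMap.snd ℝ ℝ (ℝ × ℝ))).comp
    (ContinuousLinearMap.snd ℝ ℝ (ℝ × ℝ × ℝ))

noncomputable def π4 : E4 →L[ℝ] ℝ :=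
  ((ContinuousLinearMap.snd ℝ ℝ ℝ).comp (ContinuousLinearMap.snd ℝ ℝ (ℝ × ℝ))).comp
    (ContinuousLinearMap.snd ℝ ℝ (ℝ × ℝ × ℝ))

lemma h2 (q : E4) : HasFDerivAt (fun p : E4 => p.2.1) π2 q :=
  hasFDerivAt_fst.comp q hasFDerivAt_snd

lemma h3 (q : E4) : HasFDerivAt (fun p : E4 => p.2.2.1) π3 q :=
  (hasFDerivAt_fst.comp q.2 hasFDerivAt_snd).comp q hasFDerivAt_snd

lemma h4 (q : E4) : HasFDerivAt (fun p : E4 => p.2.2.2) π4 q :=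
  (hasFDerivAt_snd.comp q.2 hasFDerivAt_snd).comp q hasFDerivAt_snd

end aux

/-- The Lie bracket `[Z, X₂]` is the indicated pointwise linear combination of
`Z`, `X₁`, `X₂` at every point with `y ≠ 0` and `y₁ ≠ 0`; in particular it lies
in the pointwise span of `Z p`, `X₁ p`, `X₂ p`, so the distribution generated by
`Z, X₁, X₂` is involutive there. -/
theorem bracket_Z_X2_in_span
    (a : ℝ → ℝ) (ha : Differentiable ℝ a) (c : ℝ)
    (Z X₁ X₂ : ℝ × ℝ × ℝ × ℝ → ℝ × ℝ × ℝ × ℝ)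
    (hZ : ∀ p : ℝ × ℝ × ℝ × ℝ,
      Z p = (1, p.2.2.1, p.2.2.2, (c - a p.2.1) * p.2.2.1))
    (hX₁ : ∀ p : ℝ × ℝ × ℝ × ℝ, X₁ p = (1, 0, 0, 0))
    (hX₂ : ∀ p : ℝ × ℝ × ℝ × ℝ, X₂ p = (0, 0, 1, p.2.2.1 / p.2.1)) :
    ∀ p : ℝ × ℝ × ℝ × ℝ, p.2.1 ≠ 0 → p.2.2.1 ≠ 0 →
      (fderiv ℝ X₂ p (Z p) - fderiv ℝ Z p (X₂ p)
          = (-1 / p.2.2.1) • Z p + (1 / p.2.2.1) • X₁ p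
            + (p.2.2.2 / p.2.2.1 - p.2.2.1 / p.2.1) • X₂ p)
        ∧ fderiv ℝ X₂ p (Z p) - fderiv ℝ Z p (X₂ p)
            ∈ Submodule.span ℝ ({Z p, X₁ p, X₂ p} : Set (ℝ × ℝ × ℝ × ℝ)) := by
  have hZf : Z = fun p : ℝ × ℝ × ℝ × ℝ =>
      ((1 : ℝ), p.2.2.1, p.2.2.2, (c - a p.2.1) * p.2.2.1) := funext hZ
  have hX₂f : X₂ = fun p : ℝ × ℝ × ℝ × ℝ =>
      ((0 : ℝ), (0 : ℝ), (1 : ℝ), p.2.2.1 / p.2.1) := funext hX₂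
  intro p hy hy1
  obtain ⟨z, y, y1, y2⟩ := p
  simp only at hy hy1
  -- derivative of X₂
  have hq : HasFDerivAt (fun p : E4 => p.2.2.1 / p.2.1)
      (y1 • ((ContinuousLinearMap.smulRight (1 : ℝ →L[ℝ] ℝ) (-(y ^ 2)⁻¹)).comp π2)
        + y⁻¹ • π3) (z, y, y1, y2) := by
    simp only [div_eq_mul_inv]
    exact (h3 _).mul (((hasDerivAt_inv hy).hasFDerivAt).comp (z, y, y1, y2) (h2 _))
  have hX2d : HasFDerivAt X₂
      ((0 : E4 →L[ℝ] ℝ).prod ((0 : E4 →L[ℝ] ℝ).prod ((0 : E4 →L[ℝ] ℝ).prod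
        (y1 • ((ContinuousLinearMap.smulRight (1 : ℝ →L[ℝ] ℝ) (-(y ^ 2)⁻¹)).comp π2)
          + y⁻¹ • π3)))) (z, y, y1, y2) := by
    rw [hX₂f]
    exact HasFDerivAt.prodMk (hasFDerivAt_const (0:ℝ) _) (HasFDerivAt.prodMk (hasFDerivAt_const (0:ℝ) _)
      (HasFDerivAt.prodMk (hasFDerivAt_const (1:ℝ) _) hq))
  -- derivative of Z
  have hZd : HasFDerivAt Z
      ((0 : E4 →L[ℝ] ℝ).prod (π3.prod (π4.prod
        ((c - a y) • π3 + y1 • (0 - (fderiv ℝ a y).comp π2))))) (z, y, y1, y2) := by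
    rw [hZf]
    refine HasFDerivAt.prodMk (hasFDerivAt_const (1:ℝ) _) (HasFDerivAt.prodMk (h3 _) (HasFDerivAt.prodMk (h4 _) ?_))
    exact HasFDerivAt.mul (HasFDerivAt.sub (hasFDerivAt_const c _)
      ((ha y).hasFDerivAt.comp (z, y, y1, y2) (h2 _))) (h3 _)
  rw [hX2d.fderiv, hZd.fderiv, hZ, hX₁, hX₂]
  have heq : ((0 : E4 →L[ℝ] ℝ).prod ((0 : E4 →L[ℝ] ℝ).prod ((0 : E4 →L[ℝ] ℝ).prod
        (y1 • ((ContinuousLinearMap.smulRight (1 : ℝ →L[ℝ] ℝ) (-(y ^ 2)⁻¹)).comp π2)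
          + y⁻¹ • π3)))) (1, y1, y2, (c - a y) * y1)
      - ((0 : E4 →L[ℝ] ℝ).prod (π3.prod (π4.prod
        ((c - a y) • π3 + y1 • (0 - (fderiv ℝ a y).comp π2))))) (0, 0, 1, y1 / y)
      = (-1 / y1) • ((1 : ℝ), y1, y2, (c - a y) * y1) + (1 / y1) • ((1:ℝ), (0:ℝ), (0:ℝ), (0:ℝ))
        + (y2 / y1 - y1 / y) • ((0:ℝ), (0:ℝ), (1:ℝ), y1 / y) := by
    simp only [ContinuousLinearMap.prod_apply, ContinuousLinearMap.zero_apply,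
      ContinuousLinearMap.smulRight_apply, ContinuousLinearMap.one_apply,
      ContinuousLinearMap.neg_apply, ContinuousLinearMap.sub_apply,
      ContinuousLinearMap.add_apply, ContinuousLinearMap.smul_apply,
      ContinuousLinearMap.comp_apply, ContinuousLinearMap.coe_fst',
      ContinuousLinearMap.coe_snd', π2, π3, π4, Prod.smul_mk, Prod.mk_sub_mk,
      Prod.mk_add_mk, smul_eq_mul, map_zero]
    refine Prod.ext ?_ (Prod.ext ?_ (Prod.ext ?_ ?_)) <;> simp <;> field_simp <;> ring
  refine ⟨heq, heq ▸ ?_⟩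
  refine Submodule.add_mem _ (Submodule.add_mem _ ?_ ?_) ?_ <;>
    exact Submodule.smul_mem _ _ (Submodule.subset_span (by simp))
end

section
/- Let H₁ : ℝ → ℝ be continuous and H₂ : ℝ → ℝ be differentiable with H₂'(s) = H₁(s)/s² for all s ≠ 0, and let C₃ ∈ ℝ. Let J ⊆ ℝ be an open interval and y : ℝ → ℝ twice differentiable with y(z) ≠ 0 for all z ∈ J, satisfying y(z)·y''(z) - (1/2)·y'(z)² - H₁(y(z)) = C₃ for all z ∈ J. Then the function I₂(z) := (y'(z)² - 2·y(z)·H₂(y(z)) + 2·C₃)/y(z) is constant on J. -/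
/-- If `y·y'' - (1/2)·y'² - H₁(y) = C₃` on an open interval where `y ≠ 0`, and
`H₂'(s) = H₁(s)/s²` for `s ≠ 0`, then `I₂ = (y'² - 2·y·H₂(y) + 2·C₃)/y` is constant
on that interval. -/
theorem first_integral_I2_constant
    (H₁ : ℝ → ℝ) (hH₁ : Continuous H₁)
    (H₂ : ℝ → ℝ) (hH₂ : ∀ s : ℝ, s ≠ 0 → HasDerivAt H₂ (H₁ s / s ^ 2) s)
    (C₃ : ℝ) (α β : ℝ) (y : ℝ → ℝ)
    (hy1 : Differentiable ℝ y)
    (hy2 : Differentiable ℝ (deriv y))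
    (hy0 : ∀ z ∈ Set.Ioo α β, y z ≠ 0)
    (hlev : ∀ z ∈ Set.Ioo α β,
      y z * iteratedDeriv 2 y z - (1 / 2) * (deriv y z) ^ 2 - H₁ (y z) = C₃) :
    ∀ z ∈ Set.Ioo α β, ∀ w ∈ Set.Ioo α β,
      ((deriv y z) ^ 2 - 2 * y z * H₂ (y z) + 2 * C₃) / y z
        = ((deriv y w) ^ 2 - 2 * y w * H₂ (y w) + 2 * C₃) / y w := by
  set f : ℝ → ℝ := fun z => ((deriv y z) ^ 2 - 2 * y z * H₂ (y z) + 2 * C₃) / y z with hf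
  have key : ∀ z ∈ Set.Ioo α β, HasDerivAt f 0 z := by
    intro z hz
    have hyz := hy0 z hz
    have hy' : HasDerivAt y (deriv y z) z := (hy1 z).hasDerivAt
    have hy'' : HasDerivAt (deriv y) (deriv (deriv y) z) z := (hy2 z).hasDerivAt
    have hH2y : HasDerivAt (fun t => H₂ (y t)) (H₁ (y z) / (y z) ^ 2 * deriv y z) z :=
      (hH₂ (y z) hyz).comp z hy'
    have hnum : HasDerivAt (fun t => (deriv y t) ^ 2 - 2 * y t * H₂ (y t) + 2 * C₃)
        (2 * deriv y z * deriv (deriv y) z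
          - (2 * deriv y z * H₂ (y z) + 2 * y z * (H₁ (y z) / (y z) ^ 2 * deriv y z))) z := by
      have h1 : HasDerivAt (fun t => (deriv y t) ^ 2) (2 * deriv y z * deriv (deriv y) z) z := by
        simpa [mul_comm, mul_assoc, mul_left_comm] using
          (hy''.fun_pow 2)
      have h2 : HasDerivAt (fun t => 2 * y t * H₂ (y t))
          (2 * deriv y z * H₂ (y z) + 2 * y z * (H₁ (y z) / (y z) ^ 2 * deriv y z)) z := by
        have := ((hy'.const_mul 2).fun_mul hH2y)
        simpa [mul_comm, mul_assoc, mul_left_comm] using this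
      simpa using (h1.sub h2).add_const (2 * C₃)
    have hdiv := hnum.div hy' hyz
    have heq : ((2 * deriv y z * deriv (deriv y) z
          - (2 * deriv y z * H₂ (y z) + 2 * y z * (H₁ (y z) / (y z) ^ 2 * deriv y z))) * y z
        - ((deriv y z) ^ 2 - 2 * y z * H₂ (y z) + 2 * C₃) * deriv y z) / (y z) ^ 2 = 0 := by
      have hl := hlev z hz
      rw [iteratedDeriv_succ, iteratedDeriv_one] at hl
      have h2' : deriv (deriv y) z = (C₃ + (1 / 2) * (deriv y z) ^ 2 + H₁ (y z)) / y z := by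
        field_simp at hl ⊢
        linarith
      rw [h2']
      field_simp
      ring
    rw [heq] at hdiv
    exact hdiv
  intro z hz w hw
  have : f z = f w := by
    apply (convex_Ioo α β).is_const_of_fderivWithin_eq_zero
      (fun x hx => ((key x hx).differentiableAt).differentiableWithinAt) ?_ hz hw
    intro x hx
    rw [fderivWithin_of_isOpen isOpen_Ioo hx, (key x hx).hasFDerivAt.fderiv]
    ext
    simp
  simpa [hf] using this
end

section
/- Let a : ℝ → ℝ be continuous, c : ℝ, H₁ : ℝ → ℝ differentiable with H₁'(s) = s·(c - a(s)) for all s, and H₂ : ℝ → ℝ differentiable with H₂'(s) = H₁(s)/s² for all s ≠ 0. Let J ⊆ ℝ be an open interval and y : ℝ → ℝ three times differentiable with y(z) ≠ 0 for all z ∈ J, satisfying -c·y'(z) + y'''(z) + a(y(z))·y'(z) = 0 for all z ∈ J. Then there exist constants C₂, C₃ ∈ ℝ such that y'(z)² = y(z)·(C₂ + 2·H₂(y(z))) - 2·C₃ for all z ∈ J. -/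
/-- A function with derivative zero on an open interval is constant there. -/
lemma const_on_Ioo {f : ℝ → ℝ} {α β : ℝ}
    (hf : ∀ x ∈ Set.Ioo α β, HasDerivAt f 0 x) :
    ∀ z₀ ∈ Set.Ioo α β, ∀ z ∈ Set.Ioo α β, f z = f z₀ := by
  intro z₀ hz₀ z hz
  have key : ∀ u v : ℝ, u ∈ Set.Ioo α β → v ∈ Set.Ioo α β → u ≤ v → f v = f u := by
    intro u v hu hv huv
    have hsub : Set.Icc u v ⊆ Set.Ioo α β := fun x hx =>
      ⟨hu.1.trans_le hx.1, hx.2.trans_lt hv.2⟩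
    have := constant_of_has_deriv_right_zero (f := f) (a := u) (b := v)
      (fun x hx => ((hf x (hsub hx)).differentiableAt.continuousAt).continuousWithinAt)
      (fun x hx => (hf x (hsub ⟨hx.1, hx.2.le⟩)).hasDerivWithinAt)
    exact this v ⟨huv, le_rfl⟩
  rcases le_total z₀ z with h | h
  · exact key z₀ z hz₀ hz h
  · exact (key z z₀ hz hz₀ h).symm

/-- Stepwise reduction: every nonvanishing solution of the travelling wave ODE
`-c·y' + y''' + a(y)·y' = 0` on an open interval satisfies the first-order equation
`y'² = y·(C₂ + 2·H₂(y)) - 2·C₃` for suitable constants `C₂, C₃`. -/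
theorem ode_reduces_to_first_order
    (a : ℝ → ℝ) (ha : Continuous a) (c : ℝ)
    (H₁ : ℝ → ℝ) (hH₁ : ∀ s : ℝ, HasDerivAt H₁ (s * (c - a s)) s)
    (H₂ : ℝ → ℝ) (hH₂ : ∀ s : ℝ, s ≠ 0 → HasDerivAt H₂ (H₁ s / s ^ 2) s)
    (α β : ℝ) (y : ℝ → ℝ)
    (hy1 : Differentiable ℝ y)
    (hy2 : Differentiable ℝ (deriv y))
    (hy3 : Differentiable ℝ (deriv (deriv y)))
    (hy0 : ∀ z ∈ Set.Ioo α β, y z ≠ 0)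
    (hode : ∀ z ∈ Set.Ioo α β,
      -c * deriv y z + iteratedDeriv 3 y z + a (y z) * deriv y z = 0) :
    ∃ C₂ C₃ : ℝ, ∀ z ∈ Set.Ioo α β,
      (deriv y z) ^ 2 = y z * (C₂ + 2 * H₂ (y z)) - 2 * C₃ := by
  by_cases hne : α < β
  swap
  · refine ⟨0, 0, fun z hz => absurd (hz.1.trans hz.2) hne⟩
  -- a base point
  set z₀ : ℝ := (α + β) / 2 with hz₀def
  have hz₀ : z₀ ∈ Set.Ioo α β := ⟨by simp [hz₀def]; linarith, by simp [hz₀def]; linarith⟩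
  have hiter : iteratedDeriv 3 y = deriv (deriv (deriv y)) := by
    simp [iteratedDeriv_succ, iteratedDeriv_zero]
  -- the first integral I₃
  set f₃ : ℝ → ℝ := fun z => y z * deriv (deriv y) z - (1/2) * (deriv y z) ^ 2 - H₁ (y z)
    with hf₃def
  have hf₃ : ∀ x ∈ Set.Ioo α β, HasDerivAt f₃ 0 x := by
    intro x hx
    have h1 : HasDerivAt y (deriv y x) x := (hy1 x).hasDerivAt
    have h2 : HasDerivAt (deriv y) (deriv (deriv y) x) x := (hy2 x).hasDerivAt
    have h3 : HasDerivAt (deriv (deriv y)) (deriv (deriv (deriv y)) x) x := (hy3 x).hasDerivAt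
    have hH1y : HasDerivAt (fun z => H₁ (y z)) ((y x * (c - a (y x))) * deriv y x) x :=
      (hH₁ (y x)).comp x h1
    have hD : HasDerivAt f₃
        ((deriv y x * deriv (deriv y) x + y x * deriv (deriv (deriv y)) x)
          - (1/2) * ((2 : ℕ) * (deriv y x) ^ (2 - 1) * deriv (deriv y) x)
          - (y x * (c - a (y x))) * deriv y x) x :=
      ((h1.mul h3).sub ((h2.pow 2).const_mul (1/2))).sub hH1y
    have hodex := hode x hx
    rw [hiter] at hodex
    have hE : (deriv y x * deriv (deriv y) x + y x * deriv (deriv (deriv y)) x)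
          - (1/2) * ((2 : ℕ) * (deriv y x) ^ (2 - 1) * deriv (deriv y) x)
          - (y x * (c - a (y x))) * deriv y x = 0 := by
      push_cast
      linear_combination y x * hodex
    rwa [hE] at hD
  have hconst3 := const_on_Ioo hf₃ z₀ hz₀
  set C₃ : ℝ := f₃ z₀ with hC₃def
  -- the second first integral I₂
  set f₂ : ℝ → ℝ := fun z => ((deriv y z) ^ 2 - 2 * (y z * H₂ (y z)) + 2 * C₃) / y z
    with hf₂def
  have hf₂ : ∀ x ∈ Set.Ioo α β, HasDerivAt f₂ 0 x := by
    intro x hx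
    have hyx : y x ≠ 0 := hy0 x hx
    have h1 : HasDerivAt y (deriv y x) x := (hy1 x).hasDerivAt
    have h2 : HasDerivAt (deriv y) (deriv (deriv y) x) x := (hy2 x).hasDerivAt
    have hH2y : HasDerivAt (fun z => H₂ (y z)) ((H₁ (y x) / (y x) ^ 2) * deriv y x) x :=
      (hH₂ (y x) hyx).comp x h1
    set N' : ℝ := (2 : ℕ) * (deriv y x) ^ (2 - 1) * deriv (deriv y) x
      - 2 * (deriv y x * H₂ (y x) + y x * ((H₁ (y x) / (y x) ^ 2) * deriv y x)) with hN'def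
    have hN : HasDerivAt (fun z => (deriv y z) ^ 2 - 2 * (y z * H₂ (y z)) + 2 * C₃) N' x :=
      (((h2.pow 2).sub ((h1.mul hH2y).const_mul 2)).add_const (2 * C₃))
    have hDiv : HasDerivAt f₂
        ((N' * y x - ((deriv y x) ^ 2 - 2 * (y x * H₂ (y x)) + 2 * C₃) * deriv y x)
          / (y x) ^ 2) x := hN.div h1 hyx
    have h3x : y x * deriv (deriv y) x - (1/2) * (deriv y x) ^ 2 - H₁ (y x) = C₃ :=
      hconst3 x hx
    have hnum : N' * y x - ((deriv y x) ^ 2 - 2 * (y x * H₂ (y x)) + 2 * C₃) * deriv y x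
        = 0 := by
      rw [hN'def]
      push_cast
      field_simp
      linear_combination (2 * deriv y x) * (h3x : y x * deriv (deriv y) x - (1/2) * (deriv y x) ^ 2 - H₁ (y x) = y z₀ * deriv (deriv y) z₀ - (1/2) * (deriv y z₀) ^ 2 - H₁ (y z₀))
    rw [hnum, zero_div] at hDiv
    exact hDiv
  have hconst2 := const_on_Ioo hf₂ z₀ hz₀
  refine ⟨f₂ z₀, C₃, fun z hz => ?_⟩
  have hyz : y z ≠ 0 := hy0 z hz
  have h2z : f₂ z = f₂ z₀ := hconst2 z hz
  rw [hf₂def] at h2z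
  field_simp at h2z
  linear_combination h2z
end

section
/- Let n ≥ 1 be a natural number, c > 0 and C₁ ∈ ℝ. The function u : ℝ² → ℝ defined by u(x,t) = (c·n·(n+1)·(n+2) / (2·cosh²((n/2)·√c·(C₁ - x + c·t))))^{1/n} (the positive real n-th root) satisfies the generalized KdV equation ∂u/∂t + ∂³u/∂x³ + (uⁿ/n)·∂u/∂x = 0 at every (x,t) ∈ ℝ². -/
private lemma cosh_rpow_deriv (q s : ℝ) :
    HasDerivAt (fun y : ℝ => Real.cosh y ^ q) (q * Real.cosh s ^ (q - 1) * Real.sinh s) s := by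
  have h1 : HasDerivAt (fun x : ℝ => x ^ q) (q * Real.cosh s ^ (q - 1)) (Real.cosh s) :=
    Real.hasDerivAt_rpow_const (Or.inl (Real.cosh_pos s).ne')
  exact h1.comp s (Real.hasDerivAt_cosh s)

/-- For `n ≥ 1` and `c > 0`, the function
`u(x,t) = (c·n·(n+1)·(n+2) / (2·cosh²((n/2)·√c·(C₁ - x + c·t))))^{1/n}`
satisfies the generalized KdV equation `u_t + u_xxx + (uⁿ/n)·u_x = 0` everywhere. -/
theorem power_sech_solves_gKdV
    (n : ℕ) (hn : 1 ≤ n) (c C₁ : ℝ) (hc : 0 < c) (u : ℝ → ℝ → ℝ)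
    (hu : ∀ x t : ℝ,
      u x t = (c * n * (n + 1) * (n + 2)
          / (2 * Real.cosh ((n / 2) * Real.sqrt c * (C₁ - x + c * t)) ^ 2))
        ^ ((1 : ℝ) / n)) :
    ∀ x t : ℝ,
      deriv (fun t' => u x t') t
        + iteratedDeriv 3 (fun x' => u x' t) x
        + ((u x t) ^ n / n) * deriv (fun x' => u x' t) x = 0 := by
  intro x t
  have hnn : (1:ℝ) ≤ (n:ℝ) := by exact_mod_cast hn
  have hn0 : (n:ℝ) ≠ 0 := by positivity
  set p : ℝ := -2 / (n:ℝ) with hp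
  set B : ℝ := (c * n * (n + 1) * (n + 2) / 2) ^ ((1 : ℝ)/(n:ℝ)) with hB
  set a : ℝ := (n:ℝ) / 2 * Real.sqrt c with ha
  set θ : ℝ → ℝ → ℝ := fun X T => (n:ℝ) / 2 * Real.sqrt c * (C₁ - X + c * T) with hθ
  have hK2 : (0:ℝ) ≤ c * n * (n + 1) * (n + 2) / 2 := by positivity
  -- rewrite u
  have hu' : ∀ X T : ℝ, u X T = B * Real.cosh (θ X T) ^ p := by
    intro X T
    rw [hu]
    have hch := Real.cosh_pos (θ X T)
    have h2 : c * n * (n + 1) * (n + 2) / (2 * Real.cosh (θ X T) ^ 2)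
        = (c * n * (n + 1) * (n + 2) / 2) * Real.cosh (θ X T) ^ ((-2 : ℝ)) := by
      have h3 : Real.cosh (θ X T) ^ ((-2):ℝ) = (Real.cosh (θ X T) ^ 2)⁻¹ := by
        rw [show ((-2):ℝ) = -((2:ℕ):ℝ) by norm_num, Real.rpow_neg hch.le, Real.rpow_natCast]
      rw [h3]
      field_simp
    rw [h2, Real.mul_rpow hK2 (by positivity), ← Real.rpow_mul hch.le,
      show (-2) * ((1:ℝ)/(n:ℝ)) = -2 / (n:ℝ) by ring]
  -- inner derivatives
  have hθx : ∀ z : ℝ, HasDerivAt (fun x' => θ x' t) (-a) z := by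
    intro z
    have h1 : HasDerivAt (fun x' : ℝ => C₁ - x' + c * t) (-1) z := by
      simpa using ((hasDerivAt_id z).const_sub C₁).add_const (c * t)
    simpa using h1.const_mul ((n:ℝ) / 2 * Real.sqrt c)
  have hθt : HasDerivAt (fun t' => θ x t') (a * c) t := by
    have h1 : HasDerivAt (fun t' : ℝ => C₁ - x + c * t') c t := by
      simpa using ((hasDerivAt_id t).const_mul c).const_add (C₁ - x)
    simpa using h1.const_mul ((n:ℝ) / 2 * Real.sqrt c)
  -- pure-function derivatives
  have hF0 : ∀ s : ℝ, HasDerivAt (fun y => B * Real.cosh y ^ p)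
      (B * (p * Real.cosh s ^ (p - 1) * Real.sinh s)) s :=
    fun s => (cosh_rpow_deriv p s).const_mul B
  have hF1 : ∀ s : ℝ, HasDerivAt (fun y => B * (p * Real.cosh y ^ (p - 1) * Real.sinh y))
      (B * ((p * ((p - 1) * Real.cosh s ^ (p - 1 - 1) * Real.sinh s)) * Real.sinh s
        + (p * Real.cosh s ^ (p - 1)) * Real.cosh s)) s := by
    intro s
    exact ((((cosh_rpow_deriv (p - 1) s).const_mul p).mul (Real.hasDerivAt_sinh s)).const_mul B)
  have hF2 : ∀ s : ℝ, HasDerivAt (fun y =>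
      B * ((p * ((p - 1) * Real.cosh y ^ (p - 1 - 1) * Real.sinh y)) * Real.sinh y
        + (p * Real.cosh y ^ (p - 1)) * Real.cosh y))
      (B * (((p * (((p - 1) * ((p - 1 - 1) * Real.cosh s ^ (p - 1 - 1 - 1) * Real.sinh s)) * Real.sinh s
              + ((p - 1) * Real.cosh s ^ (p - 1 - 1)) * Real.cosh s)) * Real.sinh s
            + (p * ((p - 1) * Real.cosh s ^ (p - 1 - 1) * Real.sinh s)) * Real.cosh s)
          + ((p * ((p - 1) * Real.cosh s ^ (p - 1 - 1) * Real.sinh s)) * Real.cosh s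
            + (p * Real.cosh s ^ (p - 1)) * Real.sinh s))) s := by
    intro s
    have hA : HasDerivAt (fun y => p * ((p - 1) * Real.cosh y ^ (p - 1 - 1) * Real.sinh y))
        (p * (((p - 1) * ((p - 1 - 1) * Real.cosh s ^ (p - 1 - 1 - 1) * Real.sinh s)) * Real.sinh s
          + ((p - 1) * Real.cosh s ^ (p - 1 - 1)) * Real.cosh s)) s :=
      (((cosh_rpow_deriv (p - 1 - 1) s).const_mul (p - 1)).mul (Real.hasDerivAt_sinh s)).const_mul p
    have hBb : HasDerivAt (fun y => p * Real.cosh y ^ (p - 1))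
        (p * ((p - 1) * Real.cosh s ^ (p - 1 - 1) * Real.sinh s)) s :=
      (cosh_rpow_deriv (p - 1) s).const_mul p
    exact ((hA.mul (Real.hasDerivAt_sinh s)).add (hBb.mul (Real.hasDerivAt_cosh s))).const_mul B
  -- derivatives in x
  have hDx0 : ∀ z : ℝ, HasDerivAt (fun x' => u x' t)
      (B * (p * Real.cosh (θ z t) ^ (p - 1) * Real.sinh (θ z t)) * -a) z := by
    intro z
    have := (hF0 (θ z t)).comp z (hθx z)
    have hfx : (fun x' => u x' t) = (fun y => B * Real.cosh y ^ p) ∘ (fun x' => θ x' t) :=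
      funext fun x' => hu' x' t
    rw [hfx]; exact this
  have hd1 : deriv (fun x' => u x' t)
      = fun z => B * (p * Real.cosh (θ z t) ^ (p - 1) * Real.sinh (θ z t)) * -a :=
    funext fun z => (hDx0 z).deriv
  have hd2 : deriv (fun z => B * (p * Real.cosh (θ z t) ^ (p - 1) * Real.sinh (θ z t)) * -a)
      = fun z => B * ((p * ((p - 1) * Real.cosh (θ z t) ^ (p - 1 - 1) * Real.sinh (θ z t))) * Real.sinh (θ z t)
        + (p * Real.cosh (θ z t) ^ (p - 1)) * Real.cosh (θ z t)) * -a * -a := by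
    funext z
    exact (((hF1 (θ z t)).comp z (hθx z)).mul_const (-a)).deriv
  have hd3 : deriv (fun z => B * ((p * ((p - 1) * Real.cosh (θ z t) ^ (p - 1 - 1) * Real.sinh (θ z t))) * Real.sinh (θ z t)
        + (p * Real.cosh (θ z t) ^ (p - 1)) * Real.cosh (θ z t)) * -a * -a)
      = fun z => B * (((p * (((p - 1) * ((p - 1 - 1) * Real.cosh (θ z t) ^ (p - 1 - 1 - 1) * Real.sinh (θ z t))) * Real.sinh (θ z t)
              + ((p - 1) * Real.cosh (θ z t) ^ (p - 1 - 1)) * Real.cosh (θ z t))) * Real.sinh (θ z t)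
            + (p * ((p - 1) * Real.cosh (θ z t) ^ (p - 1 - 1) * Real.sinh (θ z t))) * Real.cosh (θ z t))
          + ((p * ((p - 1) * Real.cosh (θ z t) ^ (p - 1 - 1) * Real.sinh (θ z t))) * Real.cosh (θ z t)
            + (p * Real.cosh (θ z t) ^ (p - 1)) * Real.sinh (θ z t))) * -a * -a * -a := by
    funext z
    exact ((((hF2 (θ z t)).comp z (hθx z)).mul_const (-a)).mul_const (-a)).deriv
  -- t derivative
  have hDt : deriv (fun t' => u x t') t
      = B * (p * Real.cosh (θ x t) ^ (p - 1) * Real.sinh (θ x t)) * (a * c) := by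
    have hft : (fun t' => u x t') = (fun y => B * Real.cosh y ^ p) ∘ (fun t' => θ x t') :=
      funext fun t' => hu' x t'
    rw [hft]; exact ((hF0 (θ x t)).comp t hθt).deriv
  -- iterated derivative
  have hit : iteratedDeriv 3 (fun x' => u x' t) x
      = B * (((p * (((p - 1) * ((p - 1 - 1) * Real.cosh (θ x t) ^ (p - 1 - 1 - 1) * Real.sinh (θ x t))) * Real.sinh (θ x t)
              + ((p - 1) * Real.cosh (θ x t) ^ (p - 1 - 1)) * Real.cosh (θ x t))) * Real.sinh (θ x t)
            + (p * ((p - 1) * Real.cosh (θ x t) ^ (p - 1 - 1) * Real.sinh (θ x t))) * Real.cosh (θ x t))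
          + ((p * ((p - 1) * Real.cosh (θ x t) ^ (p - 1 - 1) * Real.sinh (θ x t))) * Real.cosh (θ x t)
            + (p * Real.cosh (θ x t) ^ (p - 1)) * Real.sinh (θ x t))) * -a * -a * -a := by
    rw [show (3:ℕ) = 2 + 1 from rfl, iteratedDeriv_succ,
      show (2:ℕ) = 1 + 1 from rfl, iteratedDeriv_succ, iteratedDeriv_one,
      hd1, hd2, hd3]
  -- u^n
  have hch := Real.cosh_pos (θ x t)
  have hun : u x t ^ n = (c * n * (n + 1) * (n + 2) / 2) / Real.cosh (θ x t) ^ 2 := by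
    rw [hu' x t, mul_pow]
    have h1 : B ^ n = c * n * (n + 1) * (n + 2) / 2 := by
      rw [hB, ← Real.rpow_natCast ((c * n * (n + 1) * (n + 2) / 2) ^ ((1:ℝ)/(n:ℝ))) n,
        ← Real.rpow_mul hK2, one_div_mul_cancel hn0, Real.rpow_one]
    have h2 : (Real.cosh (θ x t) ^ p) ^ n = (Real.cosh (θ x t) ^ 2)⁻¹ := by
      rw [← Real.rpow_natCast (Real.cosh (θ x t) ^ p) n, ← Real.rpow_mul hch.le,
        show p * (n:ℝ) = -((2:ℕ):ℝ) by rw [hp]; field_simp; norm_num,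
        Real.rpow_neg hch.le, Real.rpow_natCast]
    rw [h1, h2]; ring
  rw [hDt, hit, (hDx0 x).deriv, hun]
  -- now pure algebra
  set s := θ x t
  set ch := Real.cosh s with hch'
  set sh := Real.sinh s with hsh'
  set R : ℝ := ch ^ p with hR
  have e1 : ch ^ (p - 1) = R / ch := by rw [hR, Real.rpow_sub hch, Real.rpow_one]
  have e2 : ch ^ (p - 1 - 1) = R / ch / ch := by rw [Real.rpow_sub hch, Real.rpow_one, e1]
  have e3 : ch ^ (p - 1 - 1 - 1) = R / ch / ch / ch := by
    rw [Real.rpow_sub hch, Real.rpow_one, e2]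
  rw [e1, e2, e3]
  have hsh2 : sh ^ 2 = ch ^ 2 - 1 := by
    have := Real.cosh_sq_sub_sinh_sq s; rw [← hch', ← hsh'] at this; linarith
  have hsq : Real.sqrt c ^ 2 = c := Real.sq_sqrt hc.le
  rw [hp, ha, ← hsq]
  have hc' : ch ≠ 0 := hch.ne'
  field_simp
  rw [Real.sqrt_sq (Real.sqrt_nonneg c)]
  linear_combination (2*B*R*sh*(Real.sqrt c)^3*((n:ℝ)+1)*((n:ℝ)+2)) * hsh2
end

section
/- Let α, β ∈ ℝ, c > 0 and C₁ ∈ ℝ. For (x,t) ∈ ℝ² set E(x,t) = e^{(√c/2)·(C₁ - x + c·t)} and D(x,t) = 240·α·E(x,t) + E(x,t)² + 67500·β·c + 14400·α². Assume D(x,t) > 0 for all (x,t) ∈ ℝ². Then the function u(x,t) = (900·c·E(x,t)/D(x,t))² satisfies the Schamel–Korteweg–de Vries equation ∂u/∂t + ∂³u/∂x³ + (α·√(u) + β·u)·∂u/∂x = 0 at every (x,t) ∈ ℝ², where √ denotes the nonnegative real square root (so that √(u) = 900·c·E/D since c > 0 and D > 0). -/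
set_option maxHeartbeats 3200000 in
/-- For `c > 0`, with `E = e^{(√c/2)·(C₁ - x + c·t)}` and
`D = 240·α·E + E² + 67500·β·c + 14400·α²` assumed positive everywhere, the function
`u = (900·c·E/D)²` satisfies the Schamel–KdV equation
`u_t + u_xxx + (α·√u + β·u)·u_x = 0` everywhere. -/
theorem solution_solves_Schamel_KdV
    (α β c C₁ : ℝ) (hc : 0 < c) (E D : ℝ → ℝ → ℝ)
    (hE : ∀ x t : ℝ, E x t = Real.exp (Real.sqrt c / 2 * (C₁ - x + c * t)))
    (hD : ∀ x t : ℝ,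
      D x t = 240 * α * E x t + (E x t) ^ 2 + 67500 * β * c + 14400 * α ^ 2)
    (hDpos : ∀ x t : ℝ, 0 < D x t)
    (u : ℝ → ℝ → ℝ)
    (hu : ∀ x t : ℝ, u x t = (900 * c * E x t / D x t) ^ 2) :
    ∀ x t : ℝ,
      deriv (fun t' => u x t') t
        + iteratedDeriv 3 (fun x' => u x' t) x
        + (α * Real.sqrt (u x t) + β * u x t) * deriv (fun x' => u x' t) x = 0 := by
  obtain ⟨s, hs, rfl⟩ : ∃ s : ℝ, 0 < s ∧ c = s ^ 2 :=
    ⟨Real.sqrt c, Real.sqrt_pos.2 hc, (Real.sq_sqrt hc.le).symm⟩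
  have hsq : Real.sqrt (s ^ 2) = s := Real.sqrt_sq hs.le
  intro x t
  set K : ℝ := 67500 * β * s ^ 2 + 14400 * α ^ 2 with hK
  have hEpos : ∀ y τ, 0 < E y τ := fun y τ => by rw [hE]; exact Real.exp_pos _
  have hD' : ∀ y τ, D y τ = 240 * α * E y τ + (E y τ) ^ 2 + K := fun y τ => by
    rw [hD, hK]; ring
  have hDne : ∀ y, 240 * α * E y t + (E y t) ^ 2 + K ≠ 0 := fun y => by
    rw [← hD']; exact (hDpos y t).ne'
  -- x-derivative of E
  have hE' : ∀ y, HasDerivAt (fun z => E z t) (-(s / 2) * E y t) y := by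
    intro y
    have h0 : (fun z => E z t) = fun z => Real.exp (s / 2 * (C₁ - z + s ^ 2 * t)) :=
      funext fun z => by rw [hE, hsq]
    rw [h0]
    have h1 : HasDerivAt (fun z : ℝ => s / 2 * (C₁ - z + s ^ 2 * t)) (s / 2 * (-1)) y :=
      (((hasDerivAt_id y).const_sub C₁).add_const (s ^ 2 * t)).const_mul (s / 2)
    exact h1.exp.congr_deriv (by rw [hE, hsq]; ring)
  -- derivative of the denominator (as a function of x)
  have hden' : ∀ y, HasDerivAt (fun z => 240 * α * E z t + (E z t) ^ 2 + K)
      (240 * α * (-(s / 2) * E y t) +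
        (2 : ℕ) * (E y t) ^ (2 - 1) * (-(s / 2) * E y t)) y :=
    fun y => (((hE' y).const_mul (240 * α)).add ((hE' y).pow 2)).add_const K
  -- first x-derivative of u
  have hu1 : ∀ y, HasDerivAt (fun z => u z t)
      (-810000 * s ^ 5 * (K * (E y t) ^ 2 - (E y t) ^ 4) /
        (240 * α * E y t + (E y t) ^ 2 + K) ^ 3) y := by
    intro y
    have h0 : (fun z => u z t) =
        fun z => (900 * s ^ 2 * E z t / (240 * α * E z t + (E z t) ^ 2 + K)) ^ 2 :=
      funext fun z => by rw [hu, hD']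
    rw [h0]
    have h1 := (((hE' y).const_mul (900 * s ^ 2)).div (hden' y) (hDne y)).pow 2
    exact h1.congr_deriv (by simp only [Pi.div_apply, Pi.pow_apply, Pi.mul_apply, Pi.sub_apply, Pi.add_apply, Nat.cast_ofNat, Nat.reduceSub, pow_one]; field_simp [hDne y]; ring)
  have hd1 : (deriv fun z => u z t) = fun y =>
      -810000 * s ^ 5 * (K * (E y t) ^ 2 - (E y t) ^ 4) /
        (240 * α * E y t + (E y t) ^ 2 + K) ^ 3 :=
    funext fun y => (hu1 y).deriv
  -- second x-derivative of u
  have hu2 : ∀ y, HasDerivAt (fun z =>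
      -810000 * s ^ 5 * (K * (E z t) ^ 2 - (E z t) ^ 4) /
        (240 * α * E z t + (E z t) ^ 2 + K) ^ 3)
      (405000 * s ^ 6 * ((E y t) ^ 2 *
          (2 * (E y t) ^ 4 - 240 * α * (E y t) ^ 3 - 8 * K * (E y t) ^ 2
            - 240 * α * K * E y t + 2 * K ^ 2)) /
        (240 * α * E y t + (E y t) ^ 2 + K) ^ 4) y := by
    intro y
    have hnum := ((((hE' y).pow 2).const_mul K).sub ((hE' y).pow 4)).const_mul
      (-810000 * s ^ 5)
    have h1 := hnum.div ((hden' y).pow 3) (pow_ne_zero 3 (hDne y))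
    exact h1.congr_deriv (by simp only [Pi.div_apply, Pi.pow_apply, Pi.mul_apply, Pi.sub_apply, Pi.add_apply, Nat.cast_ofNat, Nat.reduceSub, pow_one]; field_simp [hDne y]; ring)
  have hd2 : (deriv fun y =>
      -810000 * s ^ 5 * (K * (E y t) ^ 2 - (E y t) ^ 4) /
        (240 * α * E y t + (E y t) ^ 2 + K) ^ 3) = fun y =>
      405000 * s ^ 6 * ((E y t) ^ 2 *
          (2 * (E y t) ^ 4 - 240 * α * (E y t) ^ 3 - 8 * K * (E y t) ^ 2
            - 240 * α * K * E y t + 2 * K ^ 2)) /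
        (240 * α * E y t + (E y t) ^ 2 + K) ^ 4 :=
    funext fun y => (hu2 y).deriv
  -- third x-derivative of u (at the point x only)
  have hu3 : HasDerivAt (fun y =>
      405000 * s ^ 6 * ((E y t) ^ 2 *
          (2 * (E y t) ^ 4 - 240 * α * (E y t) ^ 3 - 8 * K * (E y t) ^ 2
            - 240 * α * K * E y t + 2 * K ^ 2)) /
        (240 * α * E y t + (E y t) ^ 2 + K) ^ 4)
      (-202500 * s ^ 7 * ((E x t) ^ 2 *
          (-4 * (E x t) ^ 6 + 1680 * α * (E x t) ^ 5
            + (44 * K - 57600 * α ^ 2) * (E x t) ^ 4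
            + (-44 * K ^ 2 + 57600 * α ^ 2 * K) * (E x t) ^ 2
            - 1680 * α * K ^ 2 * E x t + 4 * K ^ 3)) /
        (240 * α * E x t + (E x t) ^ 2 + K) ^ 5) x := by
    have hP2 := (((((((hE' x).pow 4).const_mul 2).sub
        (((hE' x).pow 3).const_mul (240 * α))).sub
        (((hE' x).pow 2).const_mul (8 * K))).sub
        ((hE' x).const_mul (240 * α * K))).add_const (2 * K ^ 2))
    have hnum := (((hE' x).pow 2).mul hP2).const_mul (405000 * s ^ 6)
    have h1 := hnum.div ((hden' x).pow 4) (pow_ne_zero 4 (hDne x))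
    exact h1.congr_deriv (by simp only [Pi.div_apply, Pi.pow_apply, Pi.mul_apply, Pi.sub_apply, Pi.add_apply, Nat.cast_ofNat, Nat.reduceSub, pow_one]; field_simp [hDne x]; ring)
  -- t-derivative of u
  have hut : HasDerivAt (fun t' => u x t')
      (810000 * s ^ 7 * (K * (E x t) ^ 2 - (E x t) ^ 4) /
        (240 * α * E x t + (E x t) ^ 2 + K) ^ 3) t := by
    have hEt : ∀ τ, HasDerivAt (fun τ' => E x τ') (s / 2 * s ^ 2 * E x τ) τ := by
      intro τ
      have h0 : (fun τ' => E x τ') = fun τ' => Real.exp (s / 2 * (C₁ - x + s ^ 2 * τ')) :=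
        funext fun τ' => by rw [hE, hsq]
      rw [h0]
      have h1 : HasDerivAt (fun τ' : ℝ => s / 2 * (C₁ - x + s ^ 2 * τ')) (s / 2 * s ^ 2) τ := by
        have := (((hasDerivAt_id τ).const_mul (s ^ 2)).const_add (C₁ - x)).const_mul (s / 2)
        exact this.congr_deriv (by ring)
      exact h1.exp.congr_deriv (by rw [hE, hsq]; ring)
    have h0 : (fun t' => u x t') =
        fun t' => (900 * s ^ 2 * E x t' / (240 * α * E x t' + (E x t') ^ 2 + K)) ^ 2 :=
      funext fun t' => by rw [hu, hD']
    rw [h0]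
    have hdent : HasDerivAt (fun t' => 240 * α * E x t' + (E x t') ^ 2 + K)
        (240 * α * (s / 2 * s ^ 2 * E x t) +
          (2 : ℕ) * (E x t) ^ (2 - 1) * (s / 2 * s ^ 2 * E x t)) t :=
      (((hEt t).const_mul (240 * α)).add ((hEt t).pow 2)).add_const K
    have hdne : 240 * α * E x t + (E x t) ^ 2 + K ≠ 0 := hDne x
    have h1 := (((hEt t).const_mul (900 * s ^ 2)).div hdent hdne).pow 2
    exact h1.congr_deriv (by simp only [Pi.div_apply, Pi.pow_apply, Pi.mul_apply, Pi.sub_apply, Pi.add_apply, Nat.cast_ofNat, Nat.reduceSub, pow_one]; field_simp [hdne]; ring)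
  -- assemble
  have h3 : iteratedDeriv 3 (fun x' => u x' t) x =
      -202500 * s ^ 7 * ((E x t) ^ 2 *
          (-4 * (E x t) ^ 6 + 1680 * α * (E x t) ^ 5
            + (44 * K - 57600 * α ^ 2) * (E x t) ^ 4
            + (-44 * K ^ 2 + 57600 * α ^ 2 * K) * (E x t) ^ 2
            - 1680 * α * K ^ 2 * E x t + 4 * K ^ 3)) /
        (240 * α * E x t + (E x t) ^ 2 + K) ^ 5 := by
    have e2 : iteratedDeriv 2 (fun x' => u x' t) = deriv (deriv fun x' => u x' t) := by
      rw [show (2 : ℕ) = 1 + 1 from rfl, iteratedDeriv_succ, iteratedDeriv_one]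
    rw [iteratedDeriv_succ (n := 2), e2, hd1, hd2]
    exact hu3.deriv
  have hsqrtu : Real.sqrt (u x t) = 900 * s ^ 2 * E x t / (240 * α * E x t + (E x t) ^ 2 + K) := by
    have hdpos : 0 < 240 * α * E x t + (E x t) ^ 2 + K := by rw [← hD']; exact hDpos x t
    rw [hu, hD']
    exact Real.sqrt_sq (div_nonneg (mul_nonneg (by positivity) (hEpos x t).le) hdpos.le)
  rw [hut.deriv, h3, hd1, hsqrtu, hu, hD']
  have hdx := hDne x
  rw [hK] at hdx ⊢
  field_simp [hdx]
  ring
end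

section
/- Let α, β ∈ ℝ, c > 0 and C₁ ∈ ℝ. For (x,t) ∈ ℝ² set E(x,t) = e^{√c·(C₁ - x + c·t)} and D(x,t) = 576·α² + 48·α·E(x,t) - 864·β·c + E(x,t)². Assume D(x,t) ≠ 0 for all (x,t) ∈ ℝ². Then the function u(x,t) = 144·c·E(x,t)/D(x,t) satisfies the Gardner equation ∂u/∂t + ∂³u/∂x³ + (2·α·u - β·u²)·∂u/∂x = 0 at every (x,t) ∈ ℝ². -/
lemma gardner_aux (A B c s : ℝ) (g : ℝ → ℝ)
    (hg : ∀ y, HasDerivAt g (-(s * g y)) y)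
    (hden : ∀ y, A + B * g y + (g y) ^ 2 ≠ 0) (x : ℝ) :
    deriv (fun y => 144 * c * g y / (A + B * g y + (g y) ^ 2)) x
      = -(144 * c * s) * g x * (A - (g x) ^ 2) / (A + B * g x + (g x) ^ 2) ^ 2
    ∧ iteratedDeriv 3 (fun y => 144 * c * g y / (A + B * g y + (g y) ^ 2)) x
      = -(144 * c * s ^ 3) * g x *
          (A ^ 3 - 4 * A ^ 2 * B * g x + (A * B ^ 2 - 23 * A ^ 2) * (g x) ^ 2
            + (23 * A - B ^ 2) * (g x) ^ 4 + 4 * B * (g x) ^ 5 - (g x) ^ 6)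
          / (A + B * g x + (g x) ^ 2) ^ 4 := by
  have hP : ∀ y, HasDerivAt (fun z => A + B * g z + (g z) ^ 2)
      (-(s * g y) * (B + 2 * g y)) y := by
    intro y
    have h := (((hg y).const_mul B).const_add A).add ((hg y).pow 2)
    refine h.congr_deriv ?_
    push_cast
    ring
  have h1 : ∀ y, HasDerivAt (fun z => 144 * c * g z / (A + B * g z + (g z) ^ 2))
      (-(144 * c * s) * g y * (A - (g y) ^ 2) / (A + B * g y + (g y) ^ 2) ^ 2) y := by
    intro y
    have hnum : HasDerivAt (fun z => 144 * c * g z) (144 * c * (-(s * g y))) y :=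
      (hg y).const_mul (144 * c)
    have h := hnum.div (hP y) (hden y)
    refine h.congr_deriv ?_
    have hd := hden y
    field_simp
    ring
  have h2 : ∀ y, HasDerivAt
      (fun z => -(144 * c * s) * g z * (A - (g z) ^ 2) / (A + B * g z + (g z) ^ 2) ^ 2)
      ((144 * c * s ^ 2) * g y *
        (A ^ 2 - A * B * g y - 6 * A * (g y) ^ 2 - B * (g y) ^ 3 + (g y) ^ 4)
        / (A + B * g y + (g y) ^ 2) ^ 3) y := by
    intro y
    have ha : HasDerivAt (fun z => -(144 * c * s) * g z) (-(144 * c * s) * (-(s * g y))) y :=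
      (hg y).const_mul (-(144 * c * s))
    have hb : HasDerivAt (fun z => A - (g z) ^ 2)
        (-((2 : ℕ) * (g y) ^ (2 - 1) * (-(s * g y)))) y := ((hg y).pow 2).const_sub A
    have hnum := ha.mul hb
    have hden2 : HasDerivAt (fun z => (A + B * g z + (g z) ^ 2) ^ 2)
        ((2 : ℕ) * (A + B * g y + (g y) ^ 2) ^ (2 - 1) * (-(s * g y) * (B + 2 * g y))) y :=
      (hP y).pow 2
    have h := hnum.div hden2 (pow_ne_zero 2 (hden y))
    refine h.congr_deriv ?_
    have hd := hden y
    norm_num only [Pi.mul_apply]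
    field_simp
    ring
  have h3 : ∀ y, HasDerivAt
      (fun z => (144 * c * s ^ 2) * g z *
        (A ^ 2 - A * B * g z - 6 * A * (g z) ^ 2 - B * (g z) ^ 3 + (g z) ^ 4)
        / (A + B * g z + (g z) ^ 2) ^ 3)
      (-(144 * c * s ^ 3) * g y *
        (A ^ 3 - 4 * A ^ 2 * B * g y + (A * B ^ 2 - 23 * A ^ 2) * (g y) ^ 2
          + (23 * A - B ^ 2) * (g y) ^ 4 + 4 * B * (g y) ^ 5 - (g y) ^ 6)
        / (A + B * g y + (g y) ^ 2) ^ 4) y := by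
    intro y
    have ha : HasDerivAt (fun z => (144 * c * s ^ 2) * g z)
        ((144 * c * s ^ 2) * (-(s * g y))) y := (hg y).const_mul (144 * c * s ^ 2)
    have hb : HasDerivAt
        (fun z => A ^ 2 - A * B * g z - 6 * A * (g z) ^ 2 - B * (g z) ^ 3 + (g z) ^ 4)
        ((0 - A * B * (-(s * g y)) - 6 * A * ((2 : ℕ) * (g y) ^ (2 - 1) * (-(s * g y)))
          - B * ((3 : ℕ) * (g y) ^ (3 - 1) * (-(s * g y)))
          + (4 : ℕ) * (g y) ^ (4 - 1) * (-(s * g y)))) y := by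
      have := (((((hg y).const_mul (A * B)).const_sub (A ^ 2)).sub
          (((hg y).pow 2).const_mul (6 * A))).sub
          (((hg y).pow 3).const_mul B)).add ((hg y).pow 4)
      refine this.congr_deriv ?_
      push_cast
      ring
    have hnum := ha.mul hb
    have hden3 : HasDerivAt (fun z => (A + B * g z + (g z) ^ 2) ^ 3)
        ((3 : ℕ) * (A + B * g y + (g y) ^ 2) ^ (3 - 1) * (-(s * g y) * (B + 2 * g y))) y :=
      (hP y).pow 3
    have h := hnum.div hden3 (pow_ne_zero 3 (hden y))
    refine h.congr_deriv ?_
    have hd := hden y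
    norm_num only [Pi.mul_apply]
    field_simp
    ring
  constructor
  · exact (h1 x).deriv
  · have d1 : deriv (fun y => 144 * c * g y / (A + B * g y + (g y) ^ 2))
        = fun y => -(144 * c * s) * g y * (A - (g y) ^ 2) / (A + B * g y + (g y) ^ 2) ^ 2 :=
      funext fun y => (h1 y).deriv
    have d2 : deriv (fun y => -(144 * c * s) * g y * (A - (g y) ^ 2)
          / (A + B * g y + (g y) ^ 2) ^ 2)
        = fun y => (144 * c * s ^ 2) * g y *
            (A ^ 2 - A * B * g y - 6 * A * (g y) ^ 2 - B * (g y) ^ 3 + (g y) ^ 4)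
            / (A + B * g y + (g y) ^ 2) ^ 3 :=
      funext fun y => (h2 y).deriv
    have e3 : iteratedDeriv 3 (fun y => 144 * c * g y / (A + B * g y + (g y) ^ 2))
        = deriv (deriv (deriv (fun y => 144 * c * g y / (A + B * g y + (g y) ^ 2)))) := by
      rw [show iteratedDeriv 3 (fun y => 144 * c * g y / (A + B * g y + (g y) ^ 2))
          = deriv (iteratedDeriv 2 (fun y => 144 * c * g y / (A + B * g y + (g y) ^ 2)))
          from iteratedDeriv_succ,
        show iteratedDeriv 2 (fun y => 144 * c * g y / (A + B * g y + (g y) ^ 2))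
          = deriv (iteratedDeriv 1 (fun y => 144 * c * g y / (A + B * g y + (g y) ^ 2)))
          from iteratedDeriv_succ, iteratedDeriv_one]
    rw [e3, d1, d2]
    exact (h3 x).deriv

set_option maxHeartbeats 2000000 in
/-- For `c > 0`, with `E = e^{√c·(C₁ - x + c·t)}` and
`D = 576·α² + 48·α·E - 864·β·c + E²` assumed nonvanishing everywhere, the function
`u = 144·c·E/D` satisfies the Gardner equation
`u_t + u_xxx + (2·α·u - β·u²)·u_x = 0` everywhere. -/
theorem solution_solves_Gardner
    (α β c C₁ : ℝ) (hc : 0 < c) (E D : ℝ → ℝ → ℝ)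
    (hE : ∀ x t : ℝ, E x t = Real.exp (Real.sqrt c * (C₁ - x + c * t)))
    (hD : ∀ x t : ℝ,
      D x t = 576 * α ^ 2 + 48 * α * E x t - 864 * β * c + (E x t) ^ 2)
    (hDne : ∀ x t : ℝ, D x t ≠ 0)
    (u : ℝ → ℝ → ℝ)
    (hu : ∀ x t : ℝ, u x t = 144 * c * E x t / D x t) :
    ∀ x t : ℝ,
      deriv (fun t' => u x t') t
        + iteratedDeriv 3 (fun x' => u x' t) x
        + (2 * α * u x t - β * (u x t) ^ 2) * deriv (fun x' => u x' t) x = 0 := by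
  intro x t
  have hs : Real.sqrt c ^ 2 = c := Real.sq_sqrt hc.le
  set s := Real.sqrt c with hs_def
  set A : ℝ := 576 * α ^ 2 - 864 * β * c with hA
  set B : ℝ := 48 * α with hB
  set g : ℝ → ℝ := fun y => Real.exp (s * (C₁ - y + c * t)) with hg_def
  have hg : ∀ y, HasDerivAt g (-(s * g y)) y := by
    intro y
    have h0 : HasDerivAt (fun y : ℝ => s * (C₁ - y + c * t)) (-s) y := by
      simpa using ((((hasDerivAt_id y).const_sub C₁).add_const (c * t)).const_mul s)
    have := h0.exp
    simpa [hg_def, mul_comm] using this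
  have hgE : ∀ y, E y t = g y := fun y => by rw [hE, hg_def]
  have hden : ∀ y, A + B * g y + (g y) ^ 2 ≠ 0 := by
    intro y h0
    apply hDne y t
    rw [hD, hgE]
    linear_combination h0
  have hufun : (fun x' => u x' t) = fun y => 144 * c * g y / (A + B * g y + (g y) ^ 2) := by
    funext z
    rw [hu, hD, hgE]
    rw [hA]
    ring_nf
  obtain ⟨hx1, hx3⟩ := gardner_aux A B c s g hg hden x
  -- time derivative
  have hgt : ∀ t', E x t' = Real.exp (s * (C₁ - x + c * t')) := fun t' => hE x t'
  have hht : HasDerivAt (fun t' : ℝ => Real.exp (s * (C₁ - x + c * t')))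
      (s * c * Real.exp (s * (C₁ - x + c * t))) t := by
    have h0 : HasDerivAt (fun t' : ℝ => s * (C₁ - x + c * t')) (s * c) t := by
      simpa using (((hasDerivAt_const t (C₁ - x)).add ((hasDerivAt_id t).const_mul c)).const_mul s)
    have := h0.exp
    simpa [mul_comm, mul_assoc, mul_left_comm] using this
  have hEt : HasDerivAt (fun t' : ℝ => E x t') (s * c * g x) t := by
    have : (fun t' : ℝ => E x t') = fun t' : ℝ => Real.exp (s * (C₁ - x + c * t')) :=
      funext fun t' => hgt t'
    rw [this]
    have hx : g x = Real.exp (s * (C₁ - x + c * t)) := by rw [hg_def]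
    rw [hx]
    exact hht
  have hPt : HasDerivAt (fun t' : ℝ => 576 * α ^ 2 + 48 * α * E x t' - 864 * β * c + (E x t') ^ 2)
      (48 * α * (s * c * g x) + 2 * g x * (s * c * g x)) t := by
    have h := ((((hEt.const_mul (48 * α)).const_add (576 * α ^ 2)).sub_const
      (864 * β * c)).add (hEt.pow 2))
    refine h.congr_deriv ?_
    · push_cast
      have hx : E x t = g x := hgE x
      rw [hx]
      ring
  have hut : HasDerivAt (fun t' => u x t')
      (144 * c * (s * c) * g x * (A - (g x) ^ 2) / (A + B * g x + (g x) ^ 2) ^ 2) t := by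
    have hfun : (fun t' => u x t') = fun t' =>
        144 * c * E x t' / (576 * α ^ 2 + 48 * α * E x t' - 864 * β * c + (E x t') ^ 2) := by
      funext t'
      rw [hu, hD]
    rw [hfun]
    have hdt : (576 * α ^ 2 + 48 * α * E x t - 864 * β * c + (E x t) ^ 2) ≠ 0 := by
      rw [← hD]; exact hDne x t
    have h := (hEt.const_mul (144 * c)).div hPt hdt
    refine h.congr_deriv ?_
    rw [hgE x] at hdt ⊢
    have hd := hden x
    field_simp
    ring
  rw [hut.deriv, hufun, hx1, hx3]
  set e := g x with he_def
  set P : ℝ := A + B * e + e ^ 2 with hPdef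
  have hP : P ≠ 0 := hden x
  have hco : 2 * α * u x t - β * (u x t) ^ 2
      = 6 * c * e * (A * B + 4 * A * e + B * e ^ 2) / P ^ 2 := by
    rw [hu, hD, hgE x, ← he_def]
    have hPP : 576 * α ^ 2 + 48 * α * e - 864 * β * c + e ^ 2 = P := by
      rw [hPdef, hA, hB]; ring
    rw [hPP]
    field_simp
    rw [hPdef, hA, hB]
    ring
  rw [hco]
  field_simp
  rw [hPdef, hA, hB, ← hs]
  ring
end
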